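/- Assume G is connected, n ≥ 3, and (G;C) is twin free. Then for u ∈ V and i ∈ {1,…,m−1}, the inequality x_{u,i+1} ≤ x_{u,i} is facet-defining for P if and only if there is no v ∈ V with N⟨v⟩ = {u} (equivalently, every leaf of G adjacent to u belongs to C). -/

import Mathlib

/-!
The functional `x_{u,i+1} - x_{u,i}` is nonzero, so its kernel is a hyperplane containing the
face. If `N⟨v⟩ = {u}`, constraint (3) for `v` reads `y_{v,i+1} ≤ x_{u,i} - x_{u,i+1}`; together
with `y ≥ 0` this puts the face inside the further hyperplane `y_{v,i+1} = 0`, so it is too small.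
Otherwise every `N⟨v⟩` contains some `w ≠ u`. The staircase points (`x_{w,j} = 1` exactly for
`j < t`, optionally with `y_{v,t} = 1` for such a `w`) that lie on the face have differences
giving every unit vector except `e_{x,(u,i)}` and `e_{x,(u,i+1)}`, and also their sum; hence the
face spans a space of codimension at most one.
-/

open Finset

namespace LegalSeq

variable {V : Type*}

/-- The generalized neighborhood `N⟨v⟩`: the closed neighborhood of `v` if `v ∈ C`,
the open neighborhood otherwise. -/
noncomputable def gN [Fintype V] (G : SimpleGraph V) (C : Set V) (v : V) : Finset V := by
  classical
  exact (Set.toFinite (if v ∈ C then insert v (G.neighborSet v) else G.neighborSet v)).toFinset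

/-- The ambient space `ℝ^{V×{1,…,m}} × ℝ^{V×{1,…,m}}` of the polytope of legal sequences. -/
abbrev Pt (V : Type*) (m : ℕ) := (V × Fin m → ℝ) × (V × Fin m → ℝ)

/-- Feasible 0/1 pairs `(x, y)` of the formulation `F₁` (constraints (1)-(5)). -/
def Feasible [Fintype V] (G : SimpleGraph V) (C : Set V) (m : ℕ) : Set (Pt V m) :=
  { p | (∀ q, p.1 q = 0 ∨ p.1 q = 1) ∧ (∀ q, p.2 q = 0 ∨ p.2 q = 1) ∧
    (∀ i : Fin m, ∑ v : V, p.2 (v, i) ≤ 1) ∧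
    (∀ v : V, ∑ i : Fin m, p.2 (v, i) ≤ 1) ∧
    (∀ (v : V) (i : Fin m) (h : i.1 + 1 < m),
        p.2 (v, ⟨i.1 + 1, h⟩) ≤ ∑ u ∈ gN G C v, (p.1 (u, i) - p.1 (u, ⟨i.1 + 1, h⟩))) ∧
    (∀ (u : V) (i : Fin m), p.1 (u, i) + ∑ v ∈ gN G C u, p.2 (v, i) ≤ 1) ∧
    (∀ (u : V) (i : Fin m) (h : i.1 + 1 < m), p.1 (u, ⟨i.1 + 1, h⟩) ≤ p.1 (u, i)) }

/-- The polytope of legal sequences: the convex hull of the feasible 0/1 pairs. -/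
noncomputable def poly [Fintype V] (G : SimpleGraph V) (C : Set V) (m : ℕ) : Set (Pt V m) :=
  convexHull ℝ (Feasible G C m)

/-- `δ(G;C)`, the minimum cardinality of a generalized neighborhood. -/
noncomputable def gdelta [Fintype V] (G : SimpleGraph V) (C : Set V) : ℕ :=
  sInf (Set.range fun v : V => (gN G C v).card)

/-- The instance `(G;C)` is twin free if distinct vertices have distinct
generalized neighborhoods. -/
def TwinFree [Fintype V] (G : SimpleGraph V) (C : Set V) : Prop :=
  ∀ u v : V, u ≠ v → gN G C u ≠ gN G C v

/-- The inequality `f p ≤ a` is valid for the polytope and the face it defines has affine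
dimension `2nm - 1`, i.e. it is facet-defining. -/
def IsFacet [Fintype V] (G : SimpleGraph V) (C : Set V) (m : ℕ)
    (f : Pt V m → ℝ) (a : ℝ) : Prop :=
  (∀ p ∈ poly G C m, f p ≤ a) ∧
  Module.finrank ℝ ((affineSpan ℝ {p ∈ poly G C m | f p = a}).direction) =
    2 * Fintype.card V * m - 1


open Module

section GeneralizedNeighborhood

variable [Fintype V] {G : SimpleGraph V} {C : Set V}

theorem mem_gN {v w : V} : w ∈ gN G C v ↔ G.Adj v w ∨ (v ∈ C ∧ w = v) := by
  classical
  simp only [gN, Set.Finite.mem_toFinset]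
  by_cases hv : v ∈ C <;> simp [hv, SimpleGraph.mem_neighborSet, or_comm, eq_comm]

theorem gN_nonempty (hiso : ∀ w : V, w ∉ C → ∃ z, G.Adj w z) (v : V) : (gN G C v).Nonempty := by
  by_cases hv : v ∈ C
  · exact ⟨v, mem_gN.2 (Or.inr ⟨hv, rfl⟩)⟩
  · obtain ⟨z, hz⟩ := hiso v hv
    exact ⟨z, mem_gN.2 (Or.inl hz)⟩

theorem exists_mem_gN_ne (hiso : ∀ w : V, w ∉ C → ∃ z, G.Adj w z) {u : V}
    (hu : ¬∃ v, gN G C v = {u}) (v : V) : ∃ w ∈ gN G C v, w ≠ u := by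
  by_contra! hall
  obtain ⟨w, hw⟩ := gN_nonempty hiso v
  exact hu ⟨v, Finset.eq_singleton_iff_unique_mem.2 ⟨hall w hw ▸ hw, hall⟩⟩

end GeneralizedNeighborhood

section LinearAlgebra

variable {K E : Type*} [Field K] [AddCommGroup E] [Module K E]

theorem direction_affineSpan_le_ker {F : Type*} [AddCommGroup F] [Module K F] {S : Set E}
    (φ : E →ₗ[K] F) {c : F} (hS : ∀ p ∈ S, φ p = c) :
    (affineSpan K S).direction ≤ LinearMap.ker φ := by
  rw [direction_affineSpan, vectorSpan_def, Submodule.span_le]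
  rintro _ ⟨p, hp, q, hq, rfl⟩
  simp [hS p hp, hS q hq]

theorem finrank_sub_one_le_of_top_le_sup_span_singleton [FiniteDimensional K E]
    {D : Submodule K E} {e : E} (h : ⊤ ≤ D ⊔ K ∙ e) : finrank K E - 1 ≤ finrank K D := by
  have : finrank K E ≤ finrank K D + 1 := calc
    finrank K E = finrank K (⊤ : Submodule K E) := (finrank_top K E).symm
    _ ≤ finrank K (D ⊔ K ∙ e : Submodule K E) := Submodule.finrank_mono h
    _ ≤ finrank K D + finrank K (K ∙ e) := Submodule.finrank_add_le_finrank_add_finrank _ _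
    _ ≤ finrank K D + 1 := by
      gcongr
      simpa using finrank_span_le_card (R := K) ({e} : Set E)
  omega

end LinearAlgebra

theorem top_le_of_forall_single_mem {R ι : Type*} [Semiring R] [Fintype ι] [DecidableEq ι]
    {W : Submodule R ((ι → R) × (ι → R))}
    (hx : ∀ q, (Pi.single q 1, 0) ∈ W) (hy : ∀ q, (0, Pi.single q 1) ∈ W) : ⊤ ≤ W := by
  rintro ⟨a, b⟩ -
  have hab : (a, b) = ∑ q, a q • (Pi.single q 1, 0) + ∑ q, b q • (0, Pi.single q 1) := by
    ext q <;> simp [Prod.fst_sum, Prod.snd_sum, Finset.sum_apply, Pi.single_apply]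
  rw [hab]
  exact W.add_mem (W.sum_mem fun q _ => W.smul_mem _ (hx q))
    (W.sum_mem fun q _ => W.smul_mem _ (hy q))

theorem sum_single_comp_le_one {α ι : Type*} [DecidableEq ι] (s : Finset α) {g : α → ι}
    (hg : g.Injective) (q : ι) : ∑ a ∈ s, (Pi.single q 1 : ι → ℝ) (g a) ≤ 1 := by
  calc _ = ∑ b ∈ s.map ⟨g, hg⟩, (Pi.single q 1 : ι → ℝ) b := (Finset.sum_map s ⟨g, hg⟩ _).symm
    _ ≤ 1 := by rw [Finset.sum_pi_single']; split_ifs <;> norm_num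

section Coordinates

variable {m : ℕ}

def xCoord (q : V × Fin m) : Pt V m →ₗ[ℝ] ℝ := LinearMap.proj q ∘ₗ LinearMap.fst ℝ _ _

def yCoord (q : V × Fin m) : Pt V m →ₗ[ℝ] ℝ := LinearMap.proj q ∘ₗ LinearMap.snd ℝ _ _

@[simp] theorem xCoord_apply (q : V × Fin m) (p : Pt V m) : xCoord q p = p.1 q := rfl

@[simp] theorem yCoord_apply (q : V × Fin m) (p : Pt V m) : yCoord q p = p.2 q := rfl

theorem finrank_pt [Fintype V] : finrank ℝ (Pt V m) = 2 * Fintype.card V * m := by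
  rw [finrank_prod, finrank_fintype_fun_eq_card, Fintype.card_prod, Fintype.card_fin]
  ring

theorem finrank_ker_xCoord_sub [Fintype V] [DecidableEq V] {a b : V × Fin m} (hab : a ≠ b) :
    finrank ℝ (LinearMap.ker (xCoord a - xCoord b)) = 2 * Fintype.card V * m - 1 := by
  have hne : xCoord a - xCoord b ≠ 0 := fun h0 => by
    simpa [hab.symm] using LinearMap.congr_fun h0 (Pi.single a 1, 0)
  have := Module.Dual.finrank_ker_add_one_of_ne_zero hne
  rw [finrank_pt] at this
  omega

end Coordinates

section StairPoints

variable [DecidableEq V] {m : ℕ}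

def stairX (w : V) (t : ℕ) : V × Fin m → ℝ := fun q => if q.1 = w ∧ q.2.1 < t then 1 else 0

def stair (w : V) (t : ℕ) : Pt V m := (stairX w t, 0)

def stairWithY (v : V) (j : Fin m) (w : V) : Pt V m :=
  (stairX w j, Pi.single (v, j) 1)

theorem stairX_eq_zero_or_one (w : V) (t : ℕ) (q : V × Fin m) :
    stairX w t q = 0 ∨ stairX w t q = 1 := by
  unfold stairX; split_ifs <;> simp

theorem stairX_le_one (w : V) (t : ℕ) (q : V × Fin m) : stairX w t q ≤ 1 := by
  rcases stairX_eq_zero_or_one w t q with h | h <;> norm_num [h]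

theorem stairX_succ_le (w : V) (t : ℕ) (a : V) (i : Fin m) (h : i.1 + 1 < m) :
    stairX w t (a, ⟨i.1 + 1, h⟩) ≤ stairX w t (a, i) := by
  unfold stairX; split_ifs <;> simp_all; omega

theorem stairX_drop_eq_one (w : V) (i : Fin m) (h : i.1 + 1 < m) :
    stairX w (i.1 + 1) (w, i) - stairX w (i.1 + 1) (w, ⟨i.1 + 1, h⟩) = 1 := by
  simp [stairX]

theorem stairX_succ_sub (w : V) (j : Fin m) :
    stairX w (j.1 + 1) - stairX w j = Pi.single (w, j) 1 := by
  ext ⟨a, b⟩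
  simp only [stairX, Pi.sub_apply, Pi.single_apply, Prod.mk.injEq, Fin.ext_iff]
  split_ifs <;> simp_all <;> omega

theorem stair_succ_sub (w : V) (j : Fin m) :
    stair w (j.1 + 1) - stair w j = (Pi.single (w, j) 1, 0) := by
  simp [stair, stairX_succ_sub]

theorem stairWithY_sub_stair (v : V) (j : Fin m) (w : V) :
    stairWithY v j w - stair w j = (0, Pi.single (v, j) 1) := by
  simp [stairWithY, stair]

theorem sum_stairX_drop_nonneg (s : Finset V) (w : V) (t : ℕ) (i : Fin m) (h : i.1 + 1 < m) :
    0 ≤ ∑ a ∈ s, (stairX w t (a, i) - stairX w t (a, ⟨i.1 + 1, h⟩)) :=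
  Finset.sum_nonneg fun a _ => sub_nonneg.2 (stairX_succ_le w t a i h)

variable [Fintype V] (G : SimpleGraph V) (C : Set V)

theorem stair_mem_feasible (w : V) (t : ℕ) : stair w t ∈ Feasible G C m :=
  ⟨stairX_eq_zero_or_one w t, fun _ => Or.inl rfl, fun _ => by simp [stair],
    fun _ => by simp [stair], fun _ i h => sum_stairX_drop_nonneg _ w t i h,
    fun a i => by simpa [stair] using stairX_le_one w t (a, i), fun a i h => stairX_succ_le w t a i h⟩

theorem stairWithY_mem_feasible {v w : V} (j : Fin m) (hw : w ∈ gN G C v) :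
    stairWithY v j w ∈ Feasible G C m := by
  refine ⟨stairX_eq_zero_or_one w j, fun q => ?_, fun i => ?_, fun v' => ?_, fun v' i h => ?_,
    fun a i => ?_, fun a i h => stairX_succ_le w j a i h⟩
  · dsimp only [stairWithY]
    rw [Pi.single_apply]
    split_ifs <;> simp
  · exact sum_single_comp_le_one _ (Prod.mk_left_injective i) _
  · exact sum_single_comp_le_one _ (Prod.mk_right_injective v') _
  · by_cases hq : (v', (⟨i.1 + 1, h⟩ : Fin m)) = (v, j)
    · obtain ⟨rfl, rfl⟩ := Prod.mk.inj hq
      calc (stairWithY v' ⟨i.1 + 1, h⟩ w).2 (v', ⟨i.1 + 1, h⟩) = 1 := by simp [stairWithY]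
        _ = stairX w (i.1 + 1) (w, i) - stairX w (i.1 + 1) (w, ⟨i.1 + 1, h⟩) :=
          (stairX_drop_eq_one w i h).symm
        _ ≤ _ := Finset.single_le_sum (f := fun a => stairX w (i.1 + 1) (a, i) -
            stairX w (i.1 + 1) (a, ⟨i.1 + 1, h⟩))
          (fun a _ => sub_nonneg.2 (stairX_succ_le _ _ a i h)) hw
    · simpa [stairWithY, Pi.single_eq_of_ne hq] using sum_stairX_drop_nonneg _ w j i h
  · by_cases hij : i = j
    · subst hij
      have hx : stairX w i (a, i) = 0 := by simp [stairX]
      simpa [stairWithY, hx] using sum_single_comp_le_one _ (Prod.mk_left_injective i) (v, i)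
    · have hy : ∑ v' ∈ gN G C a, (Pi.single (v, j) 1 : V × Fin m → ℝ) (v', i) = 0 :=
        Finset.sum_eq_zero fun v' _ => Pi.single_eq_of_ne (by simp [hij]) _
      simpa [stairWithY, hy] using stairX_le_one w j (a, i)

end StairPoints

section Face

variable [Fintype V] {G : SimpleGraph V} {C : Set V} {m : ℕ}

theorem le_of_mem_poly (φ : Pt V m →ₗ[ℝ] ℝ) {a : ℝ} (hφ : ∀ q ∈ Feasible G C m, φ q ≤ a)
    {p : Pt V m} (hp : p ∈ poly G C m) : φ p ≤ a :=
  convexHull_min hφ (convex_halfSpace_le φ.isLinear a) hp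

def xStep (u : V) (i : Fin m) (h : i.1 + 1 < m) : Pt V m →ₗ[ℝ] ℝ :=
  xCoord (u, ⟨i.1 + 1, h⟩) - xCoord (u, i)

theorem xStep_nonpos (u : V) (i : Fin m) (h : i.1 + 1 < m) {p : Pt V m}
    (hp : p ∈ poly G C m) : xStep u i h p ≤ 0 :=
  le_of_mem_poly _ (fun _ hq => sub_nonpos.2 (hq.2.2.2.2.2.2 u i h)) hp

theorem snd_nonneg (q : V × Fin m) {p : Pt V m} (hp : p ∈ poly G C m) : 0 ≤ p.2 q :=
  neg_nonpos.1 <| le_of_mem_poly (-yCoord q)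
    (fun _ hr => by rcases hr.2.1 q with h0 | h0 <;> simp [h0]) hp

theorem snd_succ_add_xStep_nonpos {u v : V} (hv : gN G C v = {u}) (i : Fin m)
    (h : i.1 + 1 < m) {p : Pt V m} (hp : p ∈ poly G C m) :
    p.2 (v, ⟨i.1 + 1, h⟩) + xStep u i h p ≤ 0 :=
  le_of_mem_poly (yCoord (v, ⟨i.1 + 1, h⟩) + xStep u i h) (fun q hq => by
    have hy := hq.2.2.2.2.1 v i h
    rw [hv, Finset.sum_singleton] at hy
    simp only [LinearMap.add_apply, yCoord_apply, xStep, LinearMap.sub_apply, xCoord_apply]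
    linarith) hp

variable (G C) in
def face (u : V) (i : Fin m) (h : i.1 + 1 < m) : Set (Pt V m) :=
  {p ∈ poly G C m | xStep u i h p = 0}

variable [DecidableEq V] {u : V} {i : Fin m} {h : i.1 + 1 < m}

theorem finrank_direction_face_le :
    finrank ℝ (affineSpan ℝ (face G C u i h)).direction ≤ 2 * Fintype.card V * m - 1 :=
  (Submodule.finrank_mono (direction_affineSpan_le_ker _ fun _ hp => hp.2)).trans_eq
    (finrank_ker_xCoord_sub (by simp [Fin.ext_iff]))

theorem finrank_direction_face_lt {v : V} (hv : gN G C v = {u}) :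
    finrank ℝ (affineSpan ℝ (face G C u i h)).direction < 2 * Fintype.card V * m - 1 := by
  set ySucc := yCoord (m := m) (v, ⟨i.1 + 1, h⟩)
  have hface : ∀ p ∈ face G C u i h, (xStep u i h).prod ySucc p = 0 := fun p hp => by
    have hle := snd_succ_add_xStep_nonpos hv i h hp.1
    have hge := snd_nonneg (v, ⟨i.1 + 1, h⟩) hp.1
    ext <;> simp [ySucc, hp.2]
    linarith [hp.2]
  have hlt : LinearMap.ker (xStep u i h) ⊓ LinearMap.ker ySucc < LinearMap.ker (xStep u i h) := by
    refine lt_of_le_of_ne inf_le_left fun heq => ?_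
    have hmem : ((0, Pi.single (v, ⟨i.1 + 1, h⟩) 1) : Pt V m) ∈ LinearMap.ker (xStep u i h) := by
      simp [xStep]
    rw [← heq] at hmem
    simpa [ySucc] using hmem.2
  calc _ ≤ finrank ℝ (LinearMap.ker ((xStep u i h).prod ySucc)) :=
        Submodule.finrank_mono (direction_affineSpan_le_ker _ hface)
    _ < finrank ℝ (LinearMap.ker (xStep u i h)) := by
        rw [LinearMap.ker_prod]; exact Submodule.finrank_lt_finrank_of_lt hlt
    _ = _ := finrank_ker_xCoord_sub (by simp [Fin.ext_iff])

theorem stair_mem_face {w : V} {t : ℕ} (hwt : ¬(w = u ∧ t = i.1 + 1)) :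
    stair w t ∈ face G C u i h := by
  refine ⟨subset_convexHull ℝ _ (stair_mem_feasible G C w t), ?_⟩
  simp only [xStep, stair, stairX, LinearMap.sub_apply, xCoord_apply]
  split_ifs <;> simp_all <;> omega

theorem stairWithY_mem_face {v w : V} (j : Fin m) (hw : w ∈ gN G C v) (hwu : w ≠ u) :
    stairWithY v j w ∈ face G C u i h := by
  refine ⟨subset_convexHull ℝ _ (stairWithY_mem_feasible G C j hw), ?_⟩
  simp [xStep, stairWithY, stairX, Ne.symm hwu]

theorem top_le_direction_face_sup (hW : ∀ v, ∃ w ∈ gN G C v, w ≠ u) :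
    ⊤ ≤ (affineSpan ℝ (face G C u i h)).direction ⊔ ℝ ∙ ((Pi.single (u, i) 1, 0) : Pt V m) := by
  have hsub : ∀ p ∈ face G C u i h, ∀ q ∈ face G C u i h,
      p - q ∈ (affineSpan ℝ (face G C u i h)).direction ⊔ ℝ ∙ ((Pi.single (u, i) 1, 0) : Pt V m) :=
    fun p hp q hq => Submodule.mem_sup_left
      (AffineSubspace.vsub_mem_direction (mem_affineSpan ℝ hp) (mem_affineSpan ℝ hq))
  refine top_le_of_forall_single_mem (fun ⟨w, j⟩ => ?_) (fun ⟨v, j⟩ => ?_)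
  · by_cases hi : (w, j) = (u, i)
    · rw [hi]
      exact Submodule.mem_sup_right (Submodule.mem_span_singleton_self _)
    by_cases hi' : (w, j) = (u, ⟨i.1 + 1, h⟩)
    · obtain ⟨rfl, rfl⟩ := Prod.mk.inj hi'
      -- `e_{w,i+1} = (stair w (i+2) - stair w i) - e_{w,i}`
      have hstep := hsub _ (stair_mem_face (w := w) (t := i.1 + 1 + 1) (by omega))
        _ (stair_mem_face (w := w) (t := i.1) (by omega))
      rw [← sub_add_sub_cancel _ (stair w (i.1 + 1)), stair_succ_sub w ⟨i.1 + 1, h⟩,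
        stair_succ_sub w i] at hstep
      simpa using Submodule.sub_mem _ hstep
        (Submodule.mem_sup_right (Submodule.mem_span_singleton_self _))
    · rw [← stair_succ_sub w j]
      refine hsub _ (stair_mem_face ?_) _ (stair_mem_face ?_)
      all_goals rintro ⟨rfl, hc⟩
      · exact hi (by rw [Prod.mk.injEq, Fin.ext_iff]; exact ⟨rfl, by omega⟩)
      · exact hi' (by rw [Prod.mk.injEq, Fin.ext_iff]; exact ⟨rfl, hc⟩)
  · obtain ⟨w, hw, hwu⟩ := hW v
    rw [← stairWithY_sub_stair v j w]
    exact hsub _ (stairWithY_mem_face j hw hwu) _ (stair_mem_face fun hc => hwu hc.1)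

end Face

theorem mono_facet_iff_general [Fintype V] (G : SimpleGraph V) (C : Set V)
    (hiso : ∀ w : V, w ∉ C → ∃ z, G.Adj w z)
    (m : ℕ) (u : V) (i : Fin m) (h : i.1 + 1 < m) :
    IsFacet G C m (fun p => p.1 (u, ⟨i.1 + 1, h⟩) - p.1 (u, i)) 0 ↔
      ¬ ∃ v : V, gN G C v = {u} := by
  classical
  change (∀ p ∈ poly G C m, xStep u i h p ≤ 0) ∧
    finrank ℝ (affineSpan ℝ (face G C u i h)).direction = 2 * Fintype.card V * m - 1 ↔ _
  rw [and_iff_right fun p hp => xStep_nonpos u i h hp]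
  constructor
  · rintro hdim ⟨v, hv⟩
    exact (finrank_direction_face_lt hv).ne hdim
  · intro hu
    refine le_antisymm finrank_direction_face_le ?_
    simpa only [finrank_pt] using finrank_sub_one_le_of_top_le_sup_span_singleton
      (top_le_direction_face_sup (exists_mem_gN_ne hiso hu))

/-- For `G` connected, `n ≥ 3`, `(G;C)` twin free: constraint (5),
`x_{u,i+1} ≤ x_{u,i}`, is facet-defining for `P` iff no vertex `v` satisfies `N⟨v⟩ = {u}`. -/
theorem mono_facet_iff [Fintype V] (G : SimpleGraph V) (C : Set V)
    (hconn : G.Connected) (hcard : 3 ≤ Fintype.card V)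
    (hiso : ∀ w : V, w ∉ C → ∃ z, G.Adj w z)
    (htf : TwinFree G C)
    (m : ℕ) (hm : m = Fintype.card V - gdelta G C + 1)
    (u : V) (i : Fin m) (h : i.1 + 1 < m) :
    IsFacet G C m (fun p => p.1 (u, ⟨i.1 + 1, h⟩) - p.1 (u, i)) 0 ↔
      ¬ ∃ v : V, gN G C v = {u} :=
  mono_facet_iff_general G C hiso m u i h

end LegalSeq
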